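/- Let $K:\mathbb{Z}^n\times\mathbb{Z}^n\to\mathbb{C}$ satisfy $|K(k,m)|\le C(k)\omega(m)$ with $C\in\ell^r(\mathbb{Z}^n)$ and $\omega\in\ell^{p_2}(\mathbb{Z}^n)$, for some $0<r\le1$ and $1\le p_2<\infty$. Then the operator $(Af)(m)=\sum_k f(k)K(k,m)$ from $\ell^{p_1}(\mathbb{Z}^n)$ to $\ell^{p_2}(\mathbb{Z}^n)$ is $r$-nuclear for any $1\le p_1<\infty$. -/

import Mathlib

/-!
As `r ≤ 1`, `ℓʳ ⊆ ℓ¹`, so `C` is summable. Each row `K(k,·)` lies in `ℓ^{p₂}` with norm at most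
`C(k) ‖ω‖_{p₂}`, hence `A = ∑ₖ K(k,·) ⊗ δₖ` converges in operator norm, and since `‖δₖ‖ = 1` in
every `ℓ^{p₁'}` this is an `r`-nuclear decomposition: `∑ₖ (C(k) ‖ω‖_{p₂})^r < ∞`.
-/

open scoped ENNReal

/-- An operator `A : ℓ^{p₁}(ι) → ℓ^{p₂}(ι)` is `r`-nuclear (`0 < r ≤ 1`),
where `p₁'` is the conjugate exponent of `p₁`, if it admits a decomposition
`A f = ∑_j g_j ⟨h_j, f⟩` with `g_j ∈ ℓ^{p₂}`, `h_j ∈ ℓ^{p₁'}` and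
`∑_j ‖g_j‖^r ‖h_j‖^r < ∞`. -/
def IsRNuclear {ι : Type*} (p₁ p₁' p₂ : ℝ≥0∞) [Fact (1 ≤ p₁)] [Fact (1 ≤ p₁')]
    [Fact (1 ≤ p₂)] (r : ℝ)
    (A : lp (fun _ : ι => ℂ) p₁ →L[ℂ] lp (fun _ : ι => ℂ) p₂) : Prop :=
  ∃ (g : ℕ → lp (fun _ : ι => ℂ) p₂) (h : ℕ → lp (fun _ : ι => ℂ) p₁'),
    (∀ (f : lp (fun _ : ι => ℂ) p₁) (m : ι),
      (A f : ι → ℂ) m = ∑' j : ℕ, g j m * ∑' k : ι, h j k * f k) ∧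
    Summable (fun j : ℕ => ‖g j‖ ^ r * ‖h j‖ ^ r)

open Function

lemma Summable.of_rpow_of_le_one {ι : Type*} {f : ι → ℝ} {r : ℝ} (hf0 : ∀ i, 0 ≤ f i)
    (hr0 : 0 < r) (hr1 : r ≤ 1) (hf : Summable fun i => f i ^ r) : Summable f := by
  have hr : (ENNReal.ofReal r).toReal = r := ENNReal.toReal_ofReal hr0.le
  have hmem : Memℓp f (ENNReal.ofReal r) :=
    memℓp_gen (by simpa only [hr, Real.norm_of_nonneg (hf0 _)] using hf)
  have h1 := (hmem.of_exponent_ge (ENNReal.ofReal_le_one.2 hr1)).summable (by simp)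
  simpa only [ENNReal.toReal_one, Real.rpow_one, Real.norm_of_nonneg (hf0 _)] using h1

lemma Function.Injective.extend_zero_map₂ {α β γ δ ε : Type*} [Zero β] [Zero γ] [Zero δ]
    {e : α → ε} (he : Injective e) (Φ : β → γ → δ) (hΦ : Φ 0 0 = 0) (g : α → β) (h : α → γ) :
    extend e (fun a => Φ (g a) (h a)) 0 = fun n => Φ (extend e g 0 n) (extend e h 0 n) := by
  funext n
  by_cases hn : ∃ a, e a = n
  · obtain ⟨a, rfl⟩ := hn
    simp only [he.extend_apply]
  · simp only [extend_apply' _ _ _ hn, Pi.zero_apply, hΦ]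

lemma isRNuclear_of_countable {ι J : Type*} [Countable J] {p₁ p₁' p₂ : ℝ≥0∞} [Fact (1 ≤ p₁)]
    [Fact (1 ≤ p₁')] [Fact (1 ≤ p₂)] {r : ℝ} (hr0 : 0 < r)
    {A : lp (fun _ : ι => ℂ) p₁ →L[ℂ] lp (fun _ : ι => ℂ) p₂}
    (g : J → lp (fun _ : ι => ℂ) p₂) (h : J → lp (fun _ : ι => ℂ) p₁')
    (hA : ∀ (f : lp (fun _ : ι => ℂ) p₁) (m : ι),
      (A f : ι → ℂ) m = ∑' j, g j m * ∑' k, h j k * f k)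
    (hs : Summable fun j => ‖g j‖ ^ r * ‖h j‖ ^ r) :
    IsRNuclear p₁ p₁' p₂ r A := by
  have : Encodable J := Encodable.ofCountable J
  have he := Encodable.encode_injective (α := J)
  refine ⟨extend Encodable.encode g 0, extend Encodable.encode h 0, fun f m => ?_, ?_⟩
  · rw [hA, ← tsum_extend_zero he, he.extend_zero_map₂
      (fun (a : lp (fun _ : ι => ℂ) p₂) (b : lp (fun _ : ι => ℂ) p₁') => a m * ∑' k, b k * f k)
      (by simp)]
  · rwa [← summable_extend_zero he, he.extend_zero_map₂ (fun (a : lp _ p₂) (b : lp _ p₁') =>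
      ‖a‖ ^ r * ‖b‖ ^ r) (by simp [Real.zero_rpow hr0.ne'])] at hs

section KernelOperator

variable {ι : Type*} {p₁ p₂ : ℝ≥0∞} [Fact (1 ≤ p₁)] [Fact (1 ≤ p₂)]

/-- The operator `f ↦ ∑ₖ f k • g k` with rows `g k`; the sum converges in operator norm once
`∑ ‖g k‖ < ∞` (otherwise `tsum` gives `0`). -/
noncomputable def kernelOperator (g : ι → lp (fun _ : ι => ℂ) p₂) :
    lp (fun _ : ι => ℂ) p₁ →L[ℂ] lp (fun _ : ι => ℂ) p₂ :=
  ∑' k, (lp.evalCLM ℂ (fun _ : ι => ℂ) p₁ k).smulRight (g k)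

lemma norm_evalCLM_le (k : ι) : ‖lp.evalCLM ℂ (fun _ : ι => ℂ) p₁ k‖ ≤ 1 :=
  LinearMap.mkContinuous_norm_le _ zero_le_one _

lemma summable_evalCLM_smulRight {g : ι → lp (fun _ : ι => ℂ) p₂}
    (hg : Summable fun k => ‖g k‖) :
    Summable fun k => (lp.evalCLM ℂ (fun _ : ι => ℂ) p₁ k).smulRight (g k) := by
  refine Summable.of_norm (hg.of_nonneg_of_le (fun _ => norm_nonneg _) fun k => ?_)
  rw [ContinuousLinearMap.norm_smulRight_apply]
  exact mul_le_of_le_one_left (norm_nonneg _) (norm_evalCLM_le k)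

lemma kernelOperator_apply_apply {g : ι → lp (fun _ : ι => ℂ) p₂}
    (hg : Summable fun k => ‖g k‖) (f : lp (fun _ : ι => ℂ) p₁) (m : ι) :
    (kernelOperator g f : ι → ℂ) m = ∑' k, f k * g k m := by
  have hs := summable_evalCLM_smulRight (p₁ := p₁) hg
  have hsf := hs.mapL (ContinuousLinearMap.apply ℂ _ f)
  rw [kernelOperator, ← ContinuousLinearMap.apply_apply f,
    (ContinuousLinearMap.apply ℂ _ f).map_tsum hs]
  exact (lp.evalCLM ℂ _ p₂ m).map_tsum hsf

end KernelOperator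

lemma tsum_single_one_mul {ι : Type*} [DecidableEq ι] (p : ℝ≥0∞) (k : ι) (f : ι → ℂ) :
    ∑' j, lp.single (E := fun _ : ι => ℂ) p k 1 j * f j = f k := by
  rw [tsum_eq_single k fun j hj => by rw [lp.single_apply_ne p k _ hj, zero_mul],
    lp.single_apply_self, one_mul]

theorem isRNuclear_kernelOperator {ι : Type*} [Countable ι] {p₁ p₂ : ℝ≥0∞} (p₁' : ℝ≥0∞)
    [Fact (1 ≤ p₁)] [Fact (1 ≤ p₁')] [Fact (1 ≤ p₂)] {r : ℝ} (hr0 : 0 < r) (hr1 : r ≤ 1)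
    {g : ι → lp (fun _ : ι => ℂ) p₂} (hg : Summable fun k => ‖g k‖ ^ r) :
    IsRNuclear p₁ p₁' p₂ r (kernelOperator g) := by
  classical
  have hg1 : Summable fun k => ‖g k‖ := hg.of_rpow_of_le_one (fun _ => norm_nonneg _) hr0 hr1
  refine isRNuclear_of_countable hr0 g (fun k => lp.single p₁' k 1) (fun f m => ?_) ?_
  · rw [kernelOperator_apply_apply hg1]
    exact tsum_congr fun k => by rw [tsum_single_one_mul, mul_comm]
  · have hp : 0 < p₁' := zero_lt_one.trans_le Fact.out
    simpa only [lp.norm_single hp, norm_one, Real.one_rpow, mul_one] using hg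

lemma lp.norm_le_norm_mul_norm_of_le {ι : Type*} {E : ι → Type*} [∀ i, NormedAddCommGroup (E i)]
    {p : ℝ≥0∞} [Fact (1 ≤ p)] {x : lp E p} {ω : lp (fun _ : ι => ℝ) p} {c : ℝ}
    (h : ∀ m, ‖x m‖ ≤ c * ω m) : ‖x‖ ≤ ‖c‖ * ‖ω‖ := by
  have hp : p ≠ 0 := (zero_lt_one.trans_le Fact.out).ne'
  rw [← norm_smul]
  exact lp.norm_mono hp fun m => (h m).trans (Real.le_norm_self _)

theorem stmt12_general {n : ℕ} (p₁ p₁' p₂ : ℝ≥0∞) [Fact (1 ≤ p₁)] [Fact (1 ≤ p₁')]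
    [Fact (1 ≤ p₂)]
    (r : ℝ) (hr0 : 0 < r) (hr1 : r ≤ 1)
    (K : (Fin n → ℤ) → (Fin n → ℤ) → ℂ)
    (C ω : (Fin n → ℤ) → ℝ)
    (hC0 : ∀ k, 0 ≤ C k) (hω0 : ∀ m, 0 ≤ ω m)
    (hCr : Summable fun k => C k ^ r)
    (hωp : Summable fun m => ω m ^ p₂.toReal)
    (hK : ∀ k m, ‖K k m‖ ≤ C k * ω m) :
    ∃ A : lp (fun _ : Fin n → ℤ => ℂ) p₁ →L[ℂ] lp (fun _ : Fin n → ℤ => ℂ) p₂,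
      (∀ (f : lp (fun _ : Fin n → ℤ => ℂ) p₁) (m : Fin n → ℤ),
        (A f : (Fin n → ℤ) → ℂ) m = ∑' k, f k * K k m) ∧
      IsRNuclear p₁ p₁' p₂ r A := by
  let ω' : lp (fun _ : Fin n → ℤ => ℝ) p₂ :=
    ⟨ω, memℓp_gen (by simpa only [Real.norm_of_nonneg (hω0 _)] using hωp)⟩
  let row k : lp (fun _ : Fin n → ℤ => ℂ) p₂ := ⟨K k, ((lp.memℓp ω').const_smul (C k)).mono (hK k)⟩
  have hrow_norm k : ‖row k‖ ≤ C k * ‖ω'‖ := by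
    simpa only [Real.norm_of_nonneg (hC0 k)] using
      lp.norm_le_norm_mul_norm_of_le (x := row k) (ω := ω') (hK k)
  have hrow : Summable fun k => ‖row k‖ ^ r :=
    (hCr.mul_right (‖ω'‖ ^ r)).of_nonneg_of_le (fun _ => by positivity) fun k =>
      (Real.rpow_le_rpow (norm_nonneg _) (hrow_norm k) hr0.le).trans_eq
        (Real.mul_rpow (hC0 k) (norm_nonneg _))
  exact ⟨kernelOperator row,
    kernelOperator_apply_apply (hrow.of_rpow_of_le_one (fun _ => norm_nonneg _) hr0 hr1),
    isRNuclear_kernelOperator p₁' hr0 hr1 hrow⟩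

/-- Let `K : ℤⁿ × ℤⁿ → ℂ` satisfy `|K(k,m)| ≤ C(k) ω(m)` with
`C ∈ ℓʳ(ℤⁿ)` and `ω ∈ ℓ^{p₂}(ℤⁿ)` nonnegative, for some `0 < r ≤ 1` and
`1 ≤ p₂ < ∞`. Then the operator `(A f)(m) = ∑_k f(k) K(k,m)` from
`ℓ^{p₁}(ℤⁿ)` to `ℓ^{p₂}(ℤⁿ)` is `r`-nuclear for any `1 ≤ p₁ < ∞`. -/
theorem stmt12 {n : ℕ} (p₁ p₁' p₂ : ℝ≥0∞) [Fact (1 ≤ p₁)] [Fact (1 ≤ p₁')]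
    [Fact (1 ≤ p₂)] (hp₁ : p₁ ≠ ⊤) (hp₂ : p₂ ≠ ⊤)
    (hconj : 1 / p₁ + 1 / p₁' = 1)
    (r : ℝ) (hr0 : 0 < r) (hr1 : r ≤ 1)
    (K : (Fin n → ℤ) → (Fin n → ℤ) → ℂ)
    (C ω : (Fin n → ℤ) → ℝ)
    (hC0 : ∀ k, 0 ≤ C k) (hω0 : ∀ m, 0 ≤ ω m)
    (hCr : Summable fun k => C k ^ r)
    (hωp : Summable fun m => ω m ^ p₂.toReal)
    (hK : ∀ k m, ‖K k m‖ ≤ C k * ω m) :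
    ∃ A : lp (fun _ : Fin n → ℤ => ℂ) p₁ →L[ℂ] lp (fun _ : Fin n → ℤ => ℂ) p₂,
      (∀ (f : lp (fun _ : Fin n → ℤ => ℂ) p₁) (m : Fin n → ℤ),
        (A f : (Fin n → ℤ) → ℂ) m = ∑' k, f k * K k m) ∧
      IsRNuclear p₁ p₁' p₂ r A :=
  stmt12_general p₁ p₁' p₂ r hr0 hr1 K C ω hC0 hω0 hCr hωp hK
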